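/- arXiv:2010.13840 — 3 statements merged into one kernel-verified Lean document; each statement's English description precedes it below -/
import Mathlib

section
/- If an open graph (G, I, O) has a flow (f, ≻), then the flow function f : Oᶜ → Iᶜ is injective; that is, for any two distinct vertices i and j in the domain of f, f(i) ≠ f(j). -/
/-- If an open graph `(G, I, O)` has a flow `(f, ≻)`, then `f` is injective on `Oᶜ`.
`prec a b` means `a ≺ b` (so `f j ≻ j` is `prec j (f j)`). -/
theorem flow_injective {V : Type*} (G : SimpleGraph V) (I O : Set V)
    (f : V → V) (prec : V → V → Prop)
    (hirr : ∀ a, ¬ prec a a)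
    (htrans : ∀ a b c, prec a b → prec b c → prec a c)
    (hfI : ∀ j, j ∉ O → f j ∉ I)
    (hF0 : ∀ j, j ∉ O → G.Adj j (f j))
    (hF1 : ∀ j, j ∉ O → prec j (f j))
    (hF2 : ∀ j, j ∉ O → ∀ k, G.Adj (f j) k → k ≠ j → prec j k) :
    ∀ i j, i ∉ O → j ∉ O → i ≠ j → f i ≠ f j := by
  intro i j hi hj hij hf
  have h1 : prec i j := hF2 i hi j (hf ▸ (hF0 j hj).symm) (Ne.symm hij)
  have h2 : prec j i := hF2 j hj i (hf ▸ (hF0 i hi).symm) hij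
  exact hirr i (htrans i j i h1 h2)
end

section
/- Suppose an open graph (G, I, O) has a flow (f, ≻) and a total order > on the vertices consistent with ≻. Define, for each vertex i, A(i) := N[i] \ (I ∪ ⋃_{j < i} N[j]), where N[i] denotes the closed neighborhood of i. Then for every non-output vertex i ∈ V \ O, the set A(i) contains f(i). -/
/-- The set `A(i) = N[i] \ (I ∪ ⋃_{j < i} N[j])` of fresh qubits assigned
just before measuring `i`. -/
def freshSet {V : Type*} [LinearOrder V] (G : SimpleGraph V) (I : Set V) (i : V) :
    Set V :=
  (insert i (G.neighborSet i)) \ (I ∪ ⋃ j < i, insert j (G.neighborSet j))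

/-- If `(G, I, O)` has a flow `(f, ≻)` with consistent total order `<`
(`prec a b → a < b`), then `f(i) ∈ A(i)` for every non-output vertex `i`. -/
theorem flow_mem_freshSet {V : Type*} [LinearOrder V] (G : SimpleGraph V)
    (I O : Set V) (f : V → V) (prec : V → V → Prop)
    (hirr : ∀ a, ¬ prec a a)
    (htrans : ∀ a b c, prec a b → prec b c → prec a c)
    (hcons : ∀ a b, prec a b → a < b)
    (hfI : ∀ j, j ∉ O → f j ∉ I)
    (hF0 : ∀ j, j ∉ O → G.Adj j (f j))
    (hF1 : ∀ j, j ∉ O → prec j (f j))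
    (hF2 : ∀ j, j ∉ O → ∀ k, G.Adj (f j) k → k ≠ j → prec j k) :
    ∀ i, i ∉ O → f i ∈ freshSet G I i := by
  intro i hi
  constructor
  · exact Set.mem_insert_iff.2 (Or.inr (hF0 i hi))
  · rintro (hI | hU)
    · exact hfI i hi hI
    · simp only [Set.mem_iUnion] at hU
      obtain ⟨j, hji, hj⟩ := hU
      rcases Set.mem_insert_iff.1 hj with h | h
      · subst h
        exact absurd (hcons _ _ (hF1 i hi)) (not_lt.2 hji.le)
      · have hadj : G.Adj (f i) j := (SimpleGraph.mem_neighborSet _ _ _).1 h |>.symm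
        have hne : j ≠ i := fun e => absurd (e ▸ hji) (lt_irrefl i)
        exact absurd (hcons _ _ (hF2 i hi j hadj hne)) (not_lt.2 hji.le)
end

section
/- Suppose an open graph (G, I, O) has a flow (f, ≻) with consistent total order >, and define A(i) := N[i] \ (I ∪ ⋃_{j < i} N[j]). Then every vertex v ∈ V \ I belongs to exactly one set A(i); that is, the nonempty sets among {A(i)}_{i ∈ V} form a partition of V \ I. -/
/-- If `(G, I, O)` has a flow `(f, ≻)` with consistent total order `<`, then
every non-input vertex `v` belongs to exactly one set `A(i)`: the nonempty
sets among the `A(i)` partition `V \ I`. -/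
theorem freshSet_partition {V : Type*} [Fintype V] [LinearOrder V]
    (G : SimpleGraph V) (I O : Set V) (hI : I.Nonempty) (hO : O.Nonempty)
    (f : V → V) (prec : V → V → Prop)
    (hirr : ∀ a, ¬ prec a a)
    (htrans : ∀ a b c, prec a b → prec b c → prec a c)
    (hcons : ∀ a b, prec a b → a < b)
    (hfI : ∀ j, j ∉ O → f j ∉ I)
    (hF0 : ∀ j, j ∉ O → G.Adj j (f j))
    (hF1 : ∀ j, j ∉ O → prec j (f j))
    (hF2 : ∀ j, j ∉ O → ∀ k, G.Adj (f j) k → k ≠ j → prec j k) :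
    ∀ v : V, v ∉ I → ∃! i : V, v ∈ freshSet G I i := by
  classical
  intro v hv
  set S : Finset V := Finset.univ.filter (fun i => v ∈ insert i (G.neighborSet i)) with hS
  have hvS : v ∈ S := by simp [hS]
  have hSne : S.Nonempty := ⟨v, hvS⟩
  set i := S.min' hSne with hi
  have hiS : i ∈ S := S.min'_mem hSne
  have hiN : v ∈ insert i (G.neighborSet i) := by
    simpa [hS] using hiS
  have hmem : v ∈ freshSet G I i := by
    refine ⟨hiN, ?_⟩
    rintro (h | h)
    · exact hv h
    · simp only [Set.mem_iUnion] at h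
      obtain ⟨j, hj, hjN⟩ := h
      have : j ∈ S := by simp only [hS, Finset.mem_filter, Finset.mem_univ, true_and]; exact hjN
      exact absurd (S.min'_le j this) (not_le.mpr hj)
  refine ⟨i, hmem, ?_⟩
  intro y hy
  obtain ⟨hyN, hyc⟩ := hy
  have hyS : y ∈ S := by simp only [hS, Finset.mem_filter, Finset.mem_univ, true_and]; exact hyN
  have h1 : i ≤ y := S.min'_le y hyS
  rcases lt_or_eq_of_le h1 with h | h
  · exfalso
    exact hyc (Or.inr (Set.mem_iUnion.mpr ⟨i, Set.mem_iUnion.mpr ⟨h, hiN⟩⟩))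
  · exact h.symm
end
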